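/- For a globally hyperbolic poset X, the set IX of closed intervals [a,b] with a ≤ b, ordered by reverse inclusion, is a directed-complete partial order in which the supremum of a directed family of intervals is their intersection. -/

import Mathlib

/-!
In the interval topology of a bicontinuous poset the sets `Ici a` and `Iic b` are closed: a point
outside is separated from them by a basic open interval `(c, d)`, found by continuity and its dual.
For a directed family of intervals, the left endpoints form a directed set and the right endpoints
a filtered one, both eventually inside the compact interval `[a₀, b₀]` of any member, so
compactness yields their supremum `p` and infimum `q`. Then `[p, q]` is the supremum of the family
in `IX` and also the intersection of its members.
-/

open Set

/-- `a` is way below `x`. -/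
def wayBelow {α : Type*} [Preorder α] (a x : α) : Prop :=
  ∀ S : Set α, S.Nonempty → DirectedOn (· ≤ ·) S → ∀ d, IsLUB S d → x ≤ d →
    ∃ s ∈ S, a ≤ s

/-- A poset is continuous if every element is the supremum of a directed set
of elements way below it. -/
def ContinuousPoset (α : Type*) [Preorder α] : Prop :=
  ∀ x : α, ∃ S : Set α, S ⊆ {a | wayBelow a x} ∧ S.Nonempty ∧
    DirectedOn (· ≤ ·) S ∧ IsLUB S x

/-- A basis for a continuous poset. -/
def PosetBasis {α : Type*} [Preorder α] (B : Set α) : Prop :=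
  ∀ x : α, ∃ S : Set α, S ⊆ B ∩ {a | wayBelow a x} ∧ S.Nonempty ∧
    DirectedOn (· ≤ ·) S ∧ IsLUB S x

/-- Scott open sets: upper sets inaccessible by directed suprema. -/
def ScottOpen {α : Type*} [Preorder α] (U : Set α) : Prop :=
  IsUpperSet U ∧ ∀ S : Set α, S.Nonempty → DirectedOn (· ≤ ·) S → ∀ d, IsLUB S d →
    d ∈ U → (S ∩ U).Nonempty

/-- The Scott topology. -/
def scottTop (α : Type*) [Preorder α] : TopologicalSpace α :=
  TopologicalSpace.generateFrom {U | ScottOpen U}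

/-- A bicontinuous poset. -/
def Bicontinuous (α : Type*) [Preorder α] : Prop :=
  ContinuousPoset α ∧
  (∀ x y : α, wayBelow x y ↔
    ∀ S : Set α, S.Nonempty → DirectedOn (· ≥ ·) S → ∀ i, IsGLB S i → i ≤ x →
      ∃ s ∈ S, s ≤ y) ∧
  (∀ x : α, DirectedOn (· ≥ ·) {y | wayBelow x y} ∧ IsGLB {y | wayBelow x y} x)

/-- The basic open intervals `(a,b) = {x | a ≪ x ≪ b}`. -/
def intervalBasis (α : Type*) [Preorder α] : Set (Set α) :=
  {s | ∃ a b : α, s = {x | wayBelow a x ∧ wayBelow x b}}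

/-- The interval topology, generated by the sets `(a,b)`. -/
def intervalTop (α : Type*) [Preorder α] : TopologicalSpace α :=
  TopologicalSpace.generateFrom (intervalBasis α)

/-- A globally hyperbolic poset: bicontinuous, with compact closed intervals. -/
def GloballyHyperbolic (α : Type*) [PartialOrder α] : Prop :=
  Bicontinuous α ∧ ∀ a b : α, @IsCompact α (intervalTop α) (Set.Icc a b)

/-- The poset of closed intervals `[a,b]`, `a ≤ b`, under reverse inclusion. -/
def IX (α : Type*) [PartialOrder α] := {p : α × α // p.1 ≤ p.2}

instance IX.instPartialOrder {α : Type*} [PartialOrder α] : PartialOrder (IX α) where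
  le x y := x.1.1 ≤ y.1.1 ∧ y.1.2 ≤ x.1.2
  le_refl x := ⟨le_refl _, le_refl _⟩
  le_trans x y z h1 h2 := ⟨h1.1.trans h2.1, h2.2.trans h1.2⟩
  le_antisymm x y h1 h2 :=
    Subtype.ext (Prod.ext_iff.mpr ⟨le_antisymm h1.1 h2.1, le_antisymm h2.2 h1.2⟩)

section Rel

variable {β : Type*}

/-- Directedness with respect to an arbitrary relation. -/
def relDirectedOn (r : β → β → Prop) (S : Set β) : Prop :=
  ∀ x ∈ S, ∀ y ∈ S, ∃ z ∈ S, r x z ∧ r y z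

/-- Least upper bound with respect to an arbitrary relation. -/
def relIsLUB (r : β → β → Prop) (S : Set β) (d : β) : Prop :=
  (∀ s ∈ S, r s d) ∧ ∀ u, (∀ s ∈ S, r s u) → r d u

/-- The way-below relation with respect to an arbitrary relation. -/
def relWayBelow (r : β → β → Prop) (a x : β) : Prop :=
  ∀ S : Set β, S.Nonempty → relDirectedOn r S → ∀ d, relIsLUB r S d → r x d →
    ∃ s ∈ S, r a s

/-- An abstract basis: a transitive relation, interpolative from the `-` direction. -/
def AbstractBasis (r : β → β → Prop) : Prop :=
  Transitive r ∧ ∀ (F : Finset β) (x : β), (∀ y ∈ F, r y x) →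
    ∃ z, (∀ y ∈ F, r y z) ∧ r z x

/-- Interpolation in the `+` direction. -/
def PlusInterpolative (r : β → β → Prop) : Prop :=
  ∀ (F : Finset β) (x : β), (∀ y ∈ F, r x y) → ∃ z, r x z ∧ (∀ y ∈ F, r z y)

/-- An ideal: a nonempty directed lower set. -/
def IsIdeal (r : β → β → Prop) (I : Set β) : Prop :=
  I.Nonempty ∧ (∀ x y, r x y → y ∈ I → x ∈ I) ∧
    ∀ x ∈ I, ∀ y ∈ I, ∃ z ∈ I, r x z ∧ r y z

/-- The ideal completion: ideals ordered by inclusion. -/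
def IdealCompletion (r : β → β → Prop) := {I : Set β // IsIdeal r I}

instance IdealCompletion.instPartialOrder {β : Type*} (r : β → β → Prop) :
    PartialOrder (IdealCompletion r) where
  le I J := I.1 ⊆ J.1
  le_refl I := subset_rfl
  le_trans I J K h1 h2 := Set.Subset.trans h1 h2
  le_antisymm I J h1 h2 := Subtype.ext (Set.Subset.antisymm h1 h2)

end Rel

/-- The order on maximal elements induced by interval endpoints. -/
def maxLe {α : Type*} (left right : α → α) (a b : α) : Prop :=
  ∃ x, left x = a ∧ right x = b

/-- An interval poset. -/
structure IntervalPoset (α : Type*) [PartialOrder α] where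
  left : α → α
  right : α → α
  left_max : ∀ x, IsMax (left x)
  right_max : ∀ x, IsMax (right x)
  glb : ∀ x, IsGLB {left x, right x} x
  glue : ∀ x y, right x = left y →
    ∃ z, IsGLB {x, y} z ∧ left z = left x ∧ right z = right y
  sub_left : ∀ x p, IsMax p → x ≤ p →
    ∃ z, IsGLB {left x, p} z ∧ left z = left x ∧ right z = p
  sub_right : ∀ x p, IsMax p → x ≤ p →
    ∃ z, IsGLB {p, right x} z ∧ left z = p ∧ right z = right x

/-- An interval domain. -/
structure IntervalDomain (α : Type*) [PartialOrder α] extends IntervalPoset α where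
  dcpo : ∀ S : Set α, S.Nonempty → DirectedOn (· ≤ ·) S → ∃ d, IsLUB S d
  cont : ContinuousPoset α
  ax1 : ∀ x p, IsMax p → wayBelow x p →
    (∀ z, IsGLB {left x, p} z → ∃ u, wayBelow z u) ∧
    (∀ z, IsGLB {p, right x} z → ∃ u, wayBelow z u)
  ax2b : ∀ x : α, (∃ u, wayBelow x u) ↔
    (∀ y, left y = left x → y ≤ x →
      relWayBelow (fun u v => u ≤ v ∧ right u = right y ∧ right v = right y) y (right y))
  ax2c : ∀ x : α, (∃ u, wayBelow x u) ↔
    (∀ y, right y = right x → y ≤ x →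
      relWayBelow (fun u v => u ≤ v ∧ left u = left y ∧ left v = left y) y (left y))
  ax3a : ∀ (p : α) (S : Set α), S.Nonempty → S ⊆ {z | left z = p} →
    DirectedOn (· ≤ ·) S → ∀ u, IsLUB S u →
      left u = p ∧ ∀ (q : α) (T : Set α), T.Nonempty → T ⊆ {z | left z = q} →
        DirectedOn (· ≤ ·) T → ∀ v, IsLUB T v → right '' T = right '' S →
          right u = right v
  ax3b : ∀ (q : α) (S : Set α), S.Nonempty → S ⊆ {z | right z = q} →
    DirectedOn (· ≤ ·) S → ∀ u, IsLUB S u →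
      right u = q ∧ ∀ (p : α) (T : Set α), T.Nonempty → T ⊆ {z | right z = p} →
        DirectedOn (· ≤ ·) T → ∀ v, IsLUB T v → left '' T = left '' S →
          left u = left v
  ax4 : ∀ x : α, @IsCompact α (scottTop α) ({y | x ≤ y} ∩ {y | IsMax y})

open Topology

section IntervalTopology

variable {α : Type*} [PartialOrder α]

theorem wayBelow.le {a x : α} (h : wayBelow a x) : a ≤ x := by
  obtain ⟨s, rfl, hs⟩ := h {x} (singleton_nonempty x) (directedOn_singleton x) x isLUB_singleton
    le_rfl
  exact hs

theorem isOpen_setOf_wayBelow_and_wayBelow (a b : α) :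
    IsOpen[intervalTop α] {x | wayBelow a x ∧ wayBelow x b} :=
  TopologicalSpace.isOpen_generateFrom_of_mem ⟨a, b, rfl⟩

namespace Bicontinuous

theorem exists_wayBelow (h : Bicontinuous α) (x : α) : ∃ c, wayBelow c x := by
  obtain ⟨S, hS, ⟨c, hc⟩, -⟩ := h.1 x
  exact ⟨c, hS hc⟩

/-- If nothing were way above `x`, then `x` would be the infimum of `∅`, i.e. the top element,
and the characterization of `≪` by filtered infima would give `x ≪ x`. -/
theorem exists_wayAbove (h : Bicontinuous α) (x : α) : ∃ d, wayBelow x d := by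
  by_contra! hno
  have hx_top : ∀ z, z ≤ x := fun z => (h.2.2 x).2.2 fun y hy => absurd hy (hno y)
  exact hno x ((h.2.1 x x).2 fun _ ⟨s, hs⟩ _ _ _ _ => ⟨s, hs, hx_top s⟩)

theorem isClosed_Ici (h : Bicontinuous α) (a : α) : IsClosed[intervalTop α] (Ici a) := by
  let _ := intervalTop α
  refine isOpen_compl_iff.1 (isOpen_iff_forall_mem_open.2 fun x hx => ?_)
  obtain ⟨d, hxd, had⟩ : ∃ d, wayBelow x d ∧ ¬ a ≤ d := by
    by_contra! hle
    exact hx ((h.2.2 x).2.2 hle)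
  obtain ⟨c, hcx⟩ := h.exists_wayBelow x
  exact ⟨_, fun z hz haz => had (le_trans haz hz.2.le), isOpen_setOf_wayBelow_and_wayBelow c d,
    hcx, hxd⟩

theorem isClosed_Iic (h : Bicontinuous α) (b : α) : IsClosed[intervalTop α] (Iic b) := by
  let _ := intervalTop α
  refine isOpen_compl_iff.1 (isOpen_iff_forall_mem_open.2 fun x hx => ?_)
  obtain ⟨c, hcx, hcb⟩ : ∃ c, wayBelow c x ∧ ¬ c ≤ b := by
    obtain ⟨S, hS, -, -, hlub⟩ := h.1 x
    by_contra! hle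
    exact hx (hlub.2 fun c hc => hle c (hS hc))
  obtain ⟨d, hxd⟩ := h.exists_wayAbove x
  exact ⟨_, fun z hz hzb => hcb (le_trans hz.1.le hzb), isOpen_setOf_wayBelow_and_wayBelow c d,
    hcx, hxd⟩

end Bicontinuous

end IntervalTopology

section CompactOrder

variable {α : Type*} [TopologicalSpace α] [Preorder α] [ClosedIicTopology α] {K L : Set α}

theorem isClosed_lowerBounds (s : Set α) : IsClosed (lowerBounds s) := by
  convert isClosed_biInter fun a (_ : a ∈ s) => isClosed_Iic (a := a)
  ext; simp [lowerBounds]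

/-- The closed sets `Ici l ∩ lowerBounds (upperBounds L)`, `l ∈ L`, form a directed family
whose intersection is the set of suprema of `L`; each meets `K`, hence so does the intersection. -/
theorem IsCompact.exists_isLUB_of_directedOn [ClosedIciTopology α] (hK : IsCompact K)
    (hne : L.Nonempty) (hdir : DirectedOn (· ≤ ·) L) (hcof : ∀ l ∈ L, ∃ l' ∈ L ∩ K, l ≤ l') :
    ∃ p, IsLUB L p := by
  have : Nonempty L := hne.to_subtype
  by_contra! hno
  have hempty : K ∩ ⋂ l : L, Ici l.1 ∩ lowerBounds (upperBounds L) = ∅ := by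
    refine eq_empty_of_forall_notMem fun p ⟨_, hp⟩ => hno p ⟨fun l hl => ?_, ?_⟩
    · exact (mem_iInter.1 hp ⟨l, hl⟩).1
    · exact (mem_iInter.1 hp (Classical.arbitrary L)).2
  obtain ⟨l, hl⟩ := hK.elim_directed_family_closed _
    (fun _ => isClosed_Ici.inter (isClosed_lowerBounds _)) hempty
    (hdir.directed_val.mono_comp (g := fun l => Ici l ∩ lowerBounds (upperBounds L)) _
      fun _ _ hlm => inter_subset_inter_left _ (Ici_subset_Ici.2 hlm))
  obtain ⟨l', ⟨hl'L, hl'K⟩, hll'⟩ := hcof l l.2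
  exact eq_empty_iff_forall_notMem.1 hl l' ⟨hl'K, hll', subset_lowerBounds_upperBounds L hl'L⟩

theorem IsCompact.exists_isGLB_of_directedOn [ClosedIciTopology α] (hK : IsCompact K)
    (hne : L.Nonempty) (hdir : DirectedOn (· ≥ ·) L) (hcof : ∀ l ∈ L, ∃ l' ∈ L ∩ K, l' ≤ l) :
    ∃ q, IsGLB L q :=
  IsCompact.exists_isLUB_of_directedOn (α := αᵒᵈ) hK hne hdir hcof

end CompactOrder

theorem Set.Icc_eq_biInter_Icc_of_isLUB_of_isGLB {α ι : Type*} [Preorder α] {S : Set ι}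
    {f g : ι → α} {p q : α} (hp : IsLUB (f '' S) p) (hq : IsGLB (g '' S) q) :
    Icc p q = ⋂ i ∈ S, Icc (f i) (g i) := by
  ext x
  simp only [mem_Icc, isLUB_le_iff hp, le_isGLB_iff hq, mem_upperBounds, mem_lowerBounds,
    forall_mem_image, mem_iInter, forall_and]

namespace IX

variable {α : Type*} [PartialOrder α] {S : Set (IX α)}

theorem fst_le_snd_of_directedOn (hS : DirectedOn (· ≤ ·) S) {s t : IX α} (hs : s ∈ S)
    (ht : t ∈ S) : s.1.1 ≤ t.1.2 := by
  obtain ⟨u, -, hsu, htu⟩ := hS s hs t ht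
  exact hsu.1.trans (u.2.trans htu.2)

theorem exists_ge_endpoints_mem_Icc (hS : DirectedOn (· ≤ ·) S) {s₀ t : IX α} (hs₀ : s₀ ∈ S)
    (ht : t ∈ S) : ∃ u ∈ S, t ≤ u ∧ u.1.1 ∈ Icc s₀.1.1 s₀.1.2 ∧ u.1.2 ∈ Icc s₀.1.1 s₀.1.2 := by
  obtain ⟨u, hu, htu, hs₀u⟩ := hS t ht s₀ hs₀
  have hsub : Icc u.1.1 u.1.2 ⊆ Icc s₀.1.1 s₀.1.2 := Icc_subset_Icc hs₀u.1 hs₀u.2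
  exact ⟨u, hu, htu, hsub (left_mem_Icc.2 u.2), hsub (right_mem_Icc.2 u.2)⟩

theorem isLUB_of_isLUB_fst_of_isGLB_snd {m : IX α} (hp : IsLUB ((·.1.1) '' S) m.1.1)
    (hq : IsGLB ((·.1.2) '' S) m.1.2) : IsLUB S m :=
  ⟨fun _ hs => ⟨hp.1 (mem_image_of_mem _ hs), hq.1 (mem_image_of_mem _ hs)⟩,
    fun _ hu => ⟨hp.2 (forall_mem_image.2 fun _ hs => (hu hs).1),
      hq.2 (forall_mem_image.2 fun _ hs => (hu hs).2)⟩⟩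

end IX

/-- for a globally hyperbolic poset, `IX` is a dcpo in which the
supremum of a directed family of intervals is their intersection. -/
theorem IX_dcpo {α : Type*} [PartialOrder α] (h : GloballyHyperbolic α)
    (S : Set (IX α)) (hne : S.Nonempty) (hdir : DirectedOn (· ≤ ·) S) :
    ∃ m : IX α, IsLUB S m ∧
      Set.Icc m.1.1 m.1.2 = ⋂ s ∈ S, Set.Icc s.1.1 s.1.2 := by
  let _ := intervalTop α
  have _ : ClosedIciTopology α := ⟨h.1.isClosed_Ici⟩
  have _ : ClosedIicTopology α := ⟨h.1.isClosed_Iic⟩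
  obtain ⟨s₀, hs₀⟩ := hne
  have hK := h.2 s₀.1.1 s₀.1.2
  obtain ⟨p, hp⟩ := hK.exists_isLUB_of_directedOn (L := (·.1.1) '' S) ⟨_, mem_image_of_mem _ hs₀⟩
    (hdir.mono_comp fun _ _ hst => hst.1) <| forall_mem_image.2 fun t ht => by
      obtain ⟨u, hu, htu, hl, -⟩ := IX.exists_ge_endpoints_mem_Icc hdir hs₀ ht
      exact ⟨_, ⟨mem_image_of_mem _ hu, hl⟩, htu.1⟩
  obtain ⟨q, hq⟩ := hK.exists_isGLB_of_directedOn (L := (·.1.2) '' S) ⟨_, mem_image_of_mem _ hs₀⟩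
    (hdir.mono_comp fun _ _ hst => hst.2) <| forall_mem_image.2 fun t ht => by
      obtain ⟨u, hu, htu, -, hr⟩ := IX.exists_ge_endpoints_mem_Icc hdir hs₀ ht
      exact ⟨_, ⟨mem_image_of_mem _ hu, hr⟩, htu.2⟩
  have hpq : p ≤ q := hq.2 <| forall_mem_image.2 fun t ht =>
    hp.2 <| forall_mem_image.2 fun s hs => IX.fst_le_snd_of_directedOn hdir hs ht
  let m : IX α := ⟨(p, q), hpq⟩
  exact ⟨m, IX.isLUB_of_isLUB_fst_of_isGLB_snd (m := m) hp hq,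
    Icc_eq_biInter_Icc_of_isLUB_of_isGLB hp hq⟩
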